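/- Every translation of a [t]-trade, obtained by adding the same fixed vector of F_2^v to every block of both legs, is again a [t]-trade. -/
import Mathlib


/-- The size (number of ones) of a vector of `F_2^v`. -/
def size {v : ℕ} (x : Fin v → ZMod 2) : ℕ :=
  (Finset.univ.filter (fun j => x j = 1)).card

/-- A `[t]`-trade. -/
def IsTrade (t v : ℕ) (T0 T1 : Finset (Fin v → ZMod 2)) : Prop :=
  Disjoint T0 T1 ∧
  ∀ s : Fin v → ZMod 2, size s ≤ t →
    (T0.filter (fun x => ∀ j, s j = 1 → x j = 1)).card =
    (T1.filter (fun x => ∀ j, s j = 1 → x j = 1)).card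

private lemma zmod2_cases : ∀ a : ZMod 2, a = 0 ∨ a = 1 := by decide

/-- Count of blocks with value 1 on `A` and 0 on `Z`. -/
private def cnt {v : ℕ} (T : Finset (Fin v → ZMod 2)) (A Z : Finset (Fin v)) : ℕ :=
  (T.filter (fun x => (∀ j ∈ A, x j = 1) ∧ ∀ j ∈ Z, x j = (0 : ZMod 2))).card

private lemma cnt_split {v : ℕ} (T : Finset (Fin v → ZMod 2)) (A Z : Finset (Fin v))
    (j : Fin v) : cnt T A Z = cnt T (insert j A) Z + cnt T A (insert j Z) := by
  classical
  unfold cnt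
  have e1 : T.filter (fun x => (∀ i ∈ insert j A, x i = 1) ∧ ∀ i ∈ Z, x i = (0:ZMod 2))
      = T.filter (fun x =>
          ((∀ i ∈ A, x i = 1) ∧ ∀ i ∈ Z, x i = (0:ZMod 2)) ∧ x j = 1) := by
    apply Finset.filter_congr
    intro x _
    simp only [Finset.mem_insert]
    constructor
    · rintro ⟨h1, h2⟩
      exact ⟨⟨fun i hi => h1 i (Or.inr hi), h2⟩, h1 j (Or.inl rfl)⟩
    · rintro ⟨⟨h1, h2⟩, hj⟩
      exact ⟨fun i hi => hi.elim (fun e => e ▸ hj) (h1 i), h2⟩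
  have e2 : T.filter (fun x => (∀ i ∈ A, x i = 1) ∧ ∀ i ∈ insert j Z, x i = (0:ZMod 2))
      = T.filter (fun x =>
          ((∀ i ∈ A, x i = 1) ∧ ∀ i ∈ Z, x i = (0:ZMod 2)) ∧ ¬ (x j = 1)) := by
    apply Finset.filter_congr
    intro x _
    simp only [Finset.mem_insert]
    constructor
    · rintro ⟨h1, h2⟩
      refine ⟨⟨h1, fun i hi => h2 i (Or.inr hi)⟩, ?_⟩
      rw [h2 j (Or.inl rfl)]; decide
    · rintro ⟨⟨h1, h2⟩, hj⟩
      have hj0 : x j = 0 := (zmod2_cases (x j)).resolve_right hj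
      exact ⟨h1, fun i hi => hi.elim (fun e => e ▸ hj0) (h2 i)⟩
  rw [e1, e2]
  have key := Finset.card_filter_add_card_filter_not
    (s := T.filter (fun x => (∀ i ∈ A, x i = 1) ∧ ∀ i ∈ Z, x i = (0:ZMod 2)))
    (p := fun x => x j = 1)
  rw [Finset.filter_filter, Finset.filter_filter] at key
  exact key.symm

/-- The main counting lemma: mixed-value counts agree. -/
private lemma cnt_eq {v t : ℕ} {T0 T1 : Finset (Fin v → ZMod 2)}
    (h : IsTrade t v T0 T1) :
    ∀ Z A : Finset (Fin v), A.card + Z.card ≤ t → cnt T0 A Z = cnt T1 A Z := by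
  classical
  intro Z
  induction Z using Finset.induction_on with
  | empty =>
    intro A hA
    set s : Fin v → ZMod 2 := fun j => if j ∈ A then 1 else 0 with hs
    have hsize : size s = A.card := by
      unfold size
      congr 1
      ext j
      simp only [Finset.mem_filter, Finset.mem_univ, true_and, hs]
      by_cases hj : j ∈ A <;> simp [hj]
    have := h.2 s (by omega)
    unfold cnt
    have hcong : ∀ (x : Fin v → ZMod 2),
        ((∀ j ∈ A, x j = 1) ∧ ∀ j ∈ (∅ : Finset (Fin v)), x j = (0:ZMod 2))
        ↔ (∀ j, s j = 1 → x j = 1) := by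
      intro x
      simp only [Finset.notMem_empty, false_implies, implies_true, and_true, hs]
      constructor
      · intro h1 j hj
        by_cases hjA : j ∈ A
        · exact h1 j hjA
        · simp [hjA] at hj
      · intro h1 j hj
        exact h1 j (by simp [hj])
    rw [Finset.filter_congr (fun x _ => hcong x), Finset.filter_congr (fun x _ => hcong x)]
    exact this
  | @insert j Z' hj ih =>
    intro A hA
    rw [Finset.card_insert_of_notMem hj] at hA
    have h1 : cnt T0 A Z' = cnt T1 A Z' := ih A (by omega)
    have h2 : cnt T0 (insert j A) Z' = cnt T1 (insert j A) Z' := by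
      apply ih
      have := Finset.card_insert_le j A
      omega
    have e0 := cnt_split T0 A Z' j
    have e1 := cnt_split T1 A Z' j
    omega

/-- any translation of a `[t]`-trade (adding a fixed vector `w`
to every block of both legs) is again a `[t]`-trade. -/
theorem tTrade_translate (v t : ℕ) (T0 T1 : Finset (Fin v → ZMod 2))
    (w : Fin v → ZMod 2) (h : IsTrade t v T0 T1) :
    IsTrade t v (T0.image (fun x => x + w)) (T1.image (fun x => x + w)) := by
  classical
  have hinj : Function.Injective (fun x : Fin v → ZMod 2 => x + w) :=
    add_left_injective w
  constructor
  · exact (Finset.disjoint_image hinj).mpr h.1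
  · intro s hs
    have key : ∀ T : Finset (Fin v → ZMod 2),
        ((T.image (fun x => x + w)).filter (fun x => ∀ j, s j = 1 → x j = 1)).card
        = cnt T (Finset.univ.filter (fun j => s j = 1 ∧ w j = 0))
                (Finset.univ.filter (fun j => s j = 1 ∧ w j = 1)) := by
      intro T
      rw [Finset.filter_image]
      rw [Finset.card_image_of_injective _ hinj]
      unfold cnt
      apply congrArg
      apply Finset.filter_congr
      intro x _
      simp only [Pi.add_apply, Finset.mem_filter, Finset.mem_univ, true_and]
      constructor
      · intro hx
        constructor
        · rintro i ⟨hi1, hi2⟩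
          have := hx i hi1
          rw [hi2, add_zero] at this; exact this
        · rintro i ⟨hi1, hi2⟩
          have := hx i hi1
          rw [hi2] at this
          rcases zmod2_cases (x i) with h0 | h1
          · exact h0
          · rw [h1] at this; exact absurd this (by decide)
      · rintro ⟨ha, hz⟩ i hi
        rcases zmod2_cases (w i) with h0 | h1
        · rw [ha i ⟨hi, h0⟩, h0, add_zero]
        · rw [hz i ⟨hi, h1⟩, h1, zero_add]
    rw [key T0, key T1]
    apply cnt_eq h
    have : (Finset.univ.filter (fun j => s j = 1 ∧ w j = 0)).card
         + (Finset.univ.filter (fun j => s j = 1 ∧ w j = 1)).card ≤ size s := by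
      unfold size
      rw [← Finset.card_union_of_disjoint]
      · apply Finset.card_le_card
        intro j hj
        simp only [Finset.mem_union, Finset.mem_filter, Finset.mem_univ, true_and] at hj ⊢
        tauto
      · rw [Finset.disjoint_filter]
        rintro j _ ⟨_, h0⟩ ⟨_, h1⟩
        rw [h0] at h1; exact absurd h1 (by decide)
    omega
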